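/- Let A be an associative algebra over ℚ and n ≥ 3, and let 𝔠_n(A) = [𝔤𝔩_n(A), 𝔤𝔩_n(A)] denote the derived Lie subalgebra. Then 𝔠_n(A) = ⊕_{1≤i≠j≤n} e_{i,j}(A²) ⊕ ⊕_{i=1}^{n-1} (e_{i,i} − e_{i+1,i+1})(A²) ⊕ e_{1,1}([A,A]). -/

import Mathlib

open Matrix

variable {A : Type*} [NonUnitalRing A] [Module ℚ A]
  [SMulCommClass ℚ A A] [IsScalarTower ℚ A A]

/-- The ideal `A²`: the span of all products. -/
def sqIdeal (A : Type*) [NonUnitalRing A] [Module ℚ A]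
    [SMulCommClass ℚ A A] [IsScalarTower ℚ A A] : Submodule ℚ A :=
  Submodule.span ℚ {x : A | ∃ a b : A, x = a * b}

/-- `[A,A]`: the span of all commutators. -/
def commIdeal (A : Type*) [NonUnitalRing A] [Module ℚ A]
    [SMulCommClass ℚ A A] [IsScalarTower ℚ A A] : Submodule ℚ A :=
  Submodule.span ℚ {x : A | ∃ a b : A, x = a * b - b * a}

/-- `𝔠_n(A) = [𝔤𝔩_n(A), 𝔤𝔩_n(A)]`: the span of all commutators of matrices. -/
def cLie (A : Type*) [NonUnitalRing A] [Module ℚ A]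
    [SMulCommClass ℚ A A] [IsScalarTower ℚ A A] (n : ℕ) :
    Submodule ℚ (Matrix (Fin n) (Fin n) A) :=
  Submodule.span ℚ
    {m : Matrix (Fin n) (Fin n) A | ∃ x y : Matrix (Fin n) (Fin n) A, m = x * y - y * x}

/-- `e_{i,j}(S)`. -/
def eSet {n : ℕ} (i j : Fin n) (S : Set A) : Set (Matrix (Fin n) (Fin n) A) :=
  {m | ∃ a ∈ S, m = Matrix.single i j a}

/-- `(e_{i,i} - e_{j,j})(S)`. -/
def dSet {n : ℕ} (i j : Fin n) (S : Set A) : Set (Matrix (Fin n) (Fin n) A) :=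
  {m | ∃ a ∈ S, m = Matrix.single i i a - Matrix.single j j a}

/-- `a ↦ single i j a` as a `ℚ`-linear map. -/
def stdLM {n : ℕ} (i j : Fin n) : A →ₗ[ℚ] Matrix (Fin n) (Fin n) A where
  toFun a := Matrix.single i j a
  map_add' a b := Matrix.single_add i j a b
  map_smul' r a := (Matrix.smul_single r i j a).symm

set_option linter.unusedSectionVars false in
lemma map_mem_of_span {M : Type*} [AddCommGroup M] [Module ℚ M] {s : Set A} {a : A}
    (f : A →ₗ[ℚ] M) (P : Submodule ℚ M) (h : ∀ x ∈ s, f x ∈ P)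
    (ha : a ∈ Submodule.span ℚ s) : f a ∈ P :=
  Submodule.mem_comap.mp
    (Submodule.span_le.mpr (fun x hx => Submodule.mem_comap.mpr (h x hx)) ha)

/-- for an associative `ℚ`-algebra `A` and `n ≥ 3`,
`𝔠_n(A) = ⊕_{i≠j} e_{i,j}(A²) ⊕ ⊕_{i=1}^{n-1} (e_{i,i}−e_{i+1,i+1})(A²) ⊕ e_{1,1}([A,A])`
(stated as the equality of `𝔠_n(A)` with the span of the displayed pieces). -/
theorem cLie_decomposition (n : ℕ) (hn : 3 ≤ n) :
    cLie A n =
      Submodule.span ℚ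
        ((⋃ (i : Fin n) (j : Fin n) (_ : i ≠ j), eSet i j (sqIdeal A : Set A)) ∪
         (⋃ (i : Fin n) (j : Fin n) (_ : (j : ℕ) = (i : ℕ) + 1),
            dSet i j (sqIdeal A : Set A)) ∪
         eSet (⟨0, by omega⟩ : Fin n) (⟨0, by omega⟩ : Fin n)
           (commIdeal A : Set A)) := by
  set z : Fin n := ⟨0, by omega⟩ with hz
  set P : Submodule ℚ (Matrix (Fin n) (Fin n) A) :=
    Submodule.span ℚ
      ((⋃ (i : Fin n) (j : Fin n) (_ : i ≠ j), eSet i j (sqIdeal A : Set A)) ∪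
       (⋃ (i : Fin n) (j : Fin n) (_ : (j : ℕ) = (i : ℕ) + 1),
          dSet i j (sqIdeal A : Set A)) ∪
       eSet z z (commIdeal A : Set A)) with hP
  -- basic membership facts for `P`
  have ha : ∀ (i j : Fin n), i ≠ j → ∀ a ∈ sqIdeal A, single i j a ∈ P := by
    intro i j hij a haa
    refine Submodule.subset_span (Or.inl (Or.inl ?_))
    exact Set.mem_iUnion.2 ⟨i, Set.mem_iUnion.2 ⟨j, Set.mem_iUnion.2 ⟨hij, ⟨a, haa, rfl⟩⟩⟩⟩
  have hb : ∀ (i j : Fin n), (j : ℕ) = (i : ℕ) + 1 → ∀ a ∈ sqIdeal A,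
      single i i a - single j j a ∈ P := by
    intro i j hij a haa
    refine Submodule.subset_span (Or.inl (Or.inr ?_))
    exact Set.mem_iUnion.2 ⟨i, Set.mem_iUnion.2 ⟨j, Set.mem_iUnion.2 ⟨hij, ⟨a, haa, rfl⟩⟩⟩⟩
  have hc : ∀ a ∈ commIdeal A, single z z a ∈ P := by
    intro a haa
    exact Submodule.subset_span (Or.inr ⟨a, haa, rfl⟩)
  -- telescoping along the diagonal
  have hd : ∀ (i : Fin n), ∀ a ∈ sqIdeal A,
      single z z a - single i i a ∈ P := by
    have key : ∀ (k : ℕ) (hk : k < n), ∀ a ∈ sqIdeal A,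
        single z z a - single (⟨k, hk⟩ : Fin n) (⟨k, hk⟩ : Fin n) a ∈ P := by
      intro k
      induction k with
      | zero =>
        intro hk a haa
        have : (⟨0, hk⟩ : Fin n) = z := rfl
        rw [this, sub_self]
        exact P.zero_mem
      | succ k ih =>
        intro hk a haa
        have hk' : k < n := by omega
        have h1 := ih hk' a haa
        have h2 := hb ⟨k, hk'⟩ ⟨k + 1, hk⟩ rfl a haa
        have := P.add_mem h1 h2
        convert this using 1
        abel
    intro i a haa
    have : i = ⟨(i : ℕ), i.isLt⟩ := by ext; rfl
    rw [this]
    exact key i i.isLt a haa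
  -- diagonal matrices with entries in `A²` and trace in `[A,A]` lie in `P`
  have hdiag : ∀ d : Fin n → A, (∀ i, d i ∈ sqIdeal A) → (∑ i, d i) ∈ commIdeal A →
      (∑ i, single i i (d i)) ∈ P := by
    intro d hd2 htr
    have hsum : single z z (∑ i, d i) = ∑ i, single z z (d i) :=
      map_sum (stdLM z z) d Finset.univ
    have heq : (∑ i, single i i (d i)) =
        (∑ i, (single i i (d i) - single z z (d i))) +
          single z z (∑ i, d i) := by
      rw [hsum, Finset.sum_sub_distrib]
      abel
    rw [heq]
    refine P.add_mem (Submodule.sum_mem _ fun i _ => ?_) (hc _ htr)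
    have := P.neg_mem (hd i (d i) (hd2 i))
    rwa [neg_sub] at this
  -- the two inclusions
  apply le_antisymm
  · -- `cLie ≤ P`
    rw [cLie]
    refine Submodule.span_le.mpr ?_
    rintro m ⟨x, y, rfl⟩
    set m : Matrix (Fin n) (Fin n) A := x * y - y * x with hm
    have hent : ∀ i j, m i j ∈ sqIdeal A := by
      intro i j
      rw [hm, Matrix.sub_apply, Matrix.mul_apply, Matrix.mul_apply]
      refine Submodule.sub_mem _ (Submodule.sum_mem _ fun k _ => ?_)
        (Submodule.sum_mem _ fun k _ => ?_) <;>
        exact Submodule.subset_span ⟨_, _, rfl⟩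
    have htr : (∑ i, m i i) ∈ commIdeal A := by
      have : ∑ i, m i i = ∑ i, ∑ k, (x i k * y k i - y k i * x i k) := by
        simp only [hm, Matrix.sub_apply, Matrix.mul_apply]
        rw [Finset.sum_sub_distrib]
        rw [show (∑ i, ∑ k, y i k * x k i) = ∑ i, ∑ k, y k i * x i k from
          Finset.sum_comm]
        rw [← Finset.sum_sub_distrib]
        exact Finset.sum_congr rfl fun i _ => (Finset.sum_sub_distrib _ _).symm
      rw [this]
      refine Submodule.sum_mem _ fun i _ => Submodule.sum_mem _ fun k _ => ?_
      exact Submodule.subset_span ⟨x i k, y k i, rfl⟩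
    -- split off the diagonal
    set D : Matrix (Fin n) (Fin n) A := ∑ i, single i i (m i i) with hD
    have hDapp : ∀ i j : Fin n, D i j = if i = j then m i j else 0 := by
      intro i j
      rw [hD, Matrix.sum_apply]
      rcases eq_or_ne i j with rfl | hij
      · simp [Matrix.single, Matrix.of_apply]
      · simp only [if_neg hij]
        refine Finset.sum_eq_zero fun k _ => ?_
        simp only [Matrix.single, Matrix.of_apply]
        rw [if_neg]
        rintro ⟨rfl, rfl⟩
        exact hij rfl
    have hmd : m = (m - D) + D := by abel
    rw [hmd]
    refine P.add_mem ?_ (hdiag _ (fun i => hent i i) htr)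
    rw [matrix_eq_sum_single (m - D)]
    refine Submodule.sum_mem _ fun i _ => Submodule.sum_mem _ fun j _ => ?_
    rcases eq_or_ne i j with rfl | hij
    · have : (m - D) i i = 0 := by
        rw [Matrix.sub_apply, hDapp i i, if_pos rfl, sub_self]
      rw [this, Matrix.single_zero]
      exact P.zero_mem
    · have : (m - D) i j = m i j := by
        rw [Matrix.sub_apply, hDapp i j, if_neg hij, sub_zero]
      rw [this]
      exact ha i j hij _ (hent i j)
  · -- `P ≤ cLie`
    refine Submodule.span_le.mpr ?_
    rintro m (h | h)
    · rcases h with h | h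
      · -- off-diagonal pieces
        simp only [Set.mem_iUnion] at h
        obtain ⟨i, j, hij, a, haa, rfl⟩ := h
        refine map_mem_of_span (stdLM i j) (cLie A n) ?_ haa
        rintro x ⟨b, c, rfl⟩
        refine Submodule.subset_span
          ⟨single i j b, single j j c, ?_⟩
        have h0 : single j j c * single i j b = 0 := by
          apply Matrix.single_mul_single_of_ne
          exact Ne.symm hij
        rw [Matrix.single_mul_single_same, h0, sub_zero]
        rfl
      · -- diagonal-difference pieces
        simp only [Set.mem_iUnion] at h
        obtain ⟨i, j, hij, a, haa, rfl⟩ := h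
        have hij' : i ≠ j := by
          intro hEq
          rw [hEq] at hij
          omega
        set f : A →ₗ[ℚ] Matrix (Fin n) (Fin n) A := stdLM i i - stdLM j j with hf
        have hgen : ∀ x ∈ {x : A | ∃ a b : A, x = a * b}, f x ∈ cLie A n := by
          rintro x ⟨b, c, rfl⟩
          have key : f (b * c) =
              (single i j b * single j i c -
                single j i c * single i j b) +
              (single j j c * single j j b -
                single j j b * single j j c) := by
            simp only [Matrix.single_mul_single_same, hf, LinearMap.sub_apply]
            show single i i (b * c) - single j j (b * c) = _
            abel
          rw [key]
          exact Submodule.add_mem _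
            (Submodule.subset_span ⟨_, _, rfl⟩) (Submodule.subset_span ⟨_, _, rfl⟩)
        have hmem := map_mem_of_span f (cLie A n) hgen haa
        have : f a = single i i a - single j j a := by
          rw [hf, LinearMap.sub_apply]; rfl
        rwa [this] at hmem
    · -- commutator piece at `(0,0)`
      obtain ⟨a, haa, rfl⟩ := h
      refine map_mem_of_span (stdLM z z) (cLie A n) ?_ haa
      rintro x ⟨b, c, rfl⟩
      refine Submodule.subset_span ⟨single z z b, single z z c, ?_⟩
      rw [Matrix.single_mul_single_same, Matrix.single_mul_single_same]
      exact map_sub (stdLM z z) (b * c) (c * b)
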